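/- Every lower mechanical word with irrational slope is balanced: for any two factors v, w of the same length, the numbers of 1's in v and w differ by at most 1. -/
import Mathlib


/-- The lower mechanical word of slope `σ` and intercept `ρ`. -/
noncomputable def lowerMech (σ ρ : ℝ) (n : ℕ) : ℤ :=
  ⌊(n + 1) * σ + ρ⌋ - ⌊n * σ + ρ⌋

/-- The factor of length `n` of the infinite word `w` starting at position `i`. -/
def wordFactor (w : ℕ → ℤ) (i n : ℕ) : List ℤ :=
  (List.range n).map (fun k => w (i + k))

lemma floor_shift_bounds (x t : ℝ) :
    ⌊t⌋ ≤ ⌊x + t⌋ - ⌊x⌋ ∧ ⌊x + t⌋ - ⌊x⌋ ≤ ⌊t⌋ + 1 := by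
  have h1 : (⌊x⌋ + ⌊t⌋ : ℤ) ≤ ⌊x + t⌋ := by
    apply Int.le_floor.2
    push_cast
    exact add_le_add (Int.floor_le x) (Int.floor_le t)
  have h2 : ⌊x + t⌋ < ⌊x⌋ + ⌊t⌋ + 2 := by
    apply Int.floor_lt.2
    push_cast
    linarith [Int.lt_floor_add_one x, Int.lt_floor_add_one t]
  omega

lemma lowerMech_mem (σ ρ : ℝ) (hσ0 : 0 ≤ σ) (hσ1 : σ < 1) (n : ℕ) :
    lowerMech σ ρ n = 0 ∨ lowerMech σ ρ n = 1 := by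
  have hσf : ⌊σ⌋ = 0 := Int.floor_eq_zero_iff.2 ⟨hσ0, hσ1⟩
  have h := floor_shift_bounds ((n : ℝ) * σ + ρ) σ
  have he : (n : ℝ) * σ + ρ + σ = ((n : ℕ) + 1) * σ + ρ := by ring
  rw [he, hσf] at h
  unfold lowerMech
  omega

lemma count_eq (σ ρ : ℝ) (hσ0 : 0 ≤ σ) (hσ1 : σ < 1) (i n : ℕ) :
    ((wordFactor (lowerMech σ ρ) i n).count 1 : ℤ) =
      ⌊((i : ℝ) + n) * σ + ρ⌋ - ⌊(i : ℝ) * σ + ρ⌋ := by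
  induction n with
  | zero => simp [wordFactor]
  | succ n ih =>
    have hf : wordFactor (lowerMech σ ρ) i (n + 1) =
        wordFactor (lowerMech σ ρ) i n ++ [lowerMech σ ρ (i + n)] := by
      simp [wordFactor, List.range_succ]
    rw [hf, List.count_append]
    have hc : (i + n : ℕ) = ((i : ℝ) + n : ℝ) → True := fun _ => trivial
    have hval : lowerMech σ ρ (i + n) = ⌊((i : ℝ) + n + 1) * σ + ρ⌋ - ⌊((i : ℝ) + n) * σ + ρ⌋ := by
      unfold lowerMech
      push_cast
      ring_nf
    rcases lowerMech_mem σ ρ hσ0 hσ1 (i + n) with h | h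
    · rw [h] at hval ⊢
      simp only [List.count_singleton]
      norm_num
      push_cast
      rw [ih]
      have : ((i : ℝ) + (n + 1)) * σ + ρ = ((i : ℝ) + n + 1) * σ + ρ := by ring
      rw [this]
      omega
    · rw [h] at hval ⊢
      simp only [List.count_singleton]
      norm_num
      push_cast
      rw [ih]
      have : ((i : ℝ) + (n + 1)) * σ + ρ = ((i : ℝ) + n + 1) * σ + ρ := by ring
      rw [this]
      omega

theorem lowerMech_balanced (σ ρ : ℝ) (hσ : Irrational σ)
    (hσ0 : 0 < σ) (hσ1 : σ < 1) (hρ0 : 0 ≤ ρ) (hρ1 : ρ < 1) :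
    ∀ i j n : ℕ,
      |((wordFactor (lowerMech σ ρ) i n).count 1 : ℤ) -
        ((wordFactor (lowerMech σ ρ) j n).count 1 : ℤ)| ≤ 1 := by
  intro i j n
  rw [count_eq σ ρ hσ0.le hσ1, count_eq σ ρ hσ0.le hσ1]
  have hi := floor_shift_bounds ((i : ℝ) * σ + ρ) ((n : ℝ) * σ)
  have hj := floor_shift_bounds ((j : ℝ) * σ + ρ) ((n : ℝ) * σ)
  have hei : (i : ℝ) * σ + ρ + (n : ℝ) * σ = ((i : ℝ) + n) * σ + ρ := by ring
  have hej : (j : ℝ) * σ + ρ + (n : ℝ) * σ = ((j : ℝ) + n) * σ + ρ := by ring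
  rw [hei] at hi
  rw [hej] at hj
  rw [abs_le]
  omega
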